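/- arXiv:1511.04466 — 6 statements merged into one kernel-verified Lean document; each statement's English description precedes it below -/
import Mathlib

section
/- Any polynomial in |x₁|, …, |x_n| with nonnegative coefficients, i.e. a finite sum of terms c·|x₁|^{a₁}⋯|x_n|^{a_n} with c ≥ 0 and nonnegative integer exponents (not all zero per non-constant term), minus its constant term, is star-convex with star center at the origin. -/
/-!
Each monomial `m(x) = ∏ |x_j|^{a_j}` is nonnegative, vanishes at `0` when some `a_j ≠ 0`, and is
homogeneous of degree `d = ∑ a_j ≥ 1`; so for `t ∈ [0,1]` we get `m(t x) = t^d m(x) ≤ t m(x)`.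
A nonnegative combination of such monomials inherits all of this, which is star-convexity at `0`
with `f 0 = 0`.
-/

section AbsMonomial

variable {κ : Type*} [Fintype κ]

lemma prod_abs_pow_nonneg (a : κ → ℕ) (x : κ → ℝ) : 0 ≤ ∏ j, |x j| ^ a j :=
  Finset.prod_nonneg fun _ _ => pow_nonneg (abs_nonneg _) _

lemma prod_abs_pow_zero {a : κ → ℕ} (ha : ∃ j, a j ≠ 0) : ∏ j, |(0 : κ → ℝ) j| ^ a j = 0 := by
  obtain ⟨j, hj⟩ := ha
  exact Finset.prod_eq_zero (Finset.mem_univ j) (by simp [zero_pow hj])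

lemma prod_abs_pow_smul (a : κ → ℕ) (t : ℝ) (x : κ → ℝ) :
    ∏ j, |(t • x) j| ^ a j = |t| ^ (∑ j, a j) * ∏ j, |x j| ^ a j := by
  rw [← Finset.prod_pow_eq_pow_sum, ← Finset.prod_mul_distrib]
  simp only [Pi.smul_apply, smul_eq_mul, abs_mul, mul_pow]

lemma prod_abs_pow_smul_le {a : κ → ℕ} (ha : ∃ j, a j ≠ 0) {t : ℝ} (ht₀ : 0 ≤ t) (ht₁ : t ≤ 1)
    (x : κ → ℝ) : ∏ j, |(t • x) j| ^ a j ≤ t * ∏ j, |x j| ^ a j := by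
  obtain ⟨j, hj⟩ := ha
  have hdeg : ∑ j, a j ≠ 0 := fun h => hj (Finset.sum_eq_zero_iff.mp h j (Finset.mem_univ j))
  rw [prod_abs_pow_smul, abs_of_nonneg ht₀]
  exact mul_le_mul_of_nonneg_right (pow_le_of_le_one ht₀ ht₁ hdeg) (prod_abs_pow_nonneg a x)

end AbsMonomial

theorem stmt8 (n : ℕ) {ι : Type*} (S : Finset ι) (c : ι → ℝ) (a : ι → Fin n → ℕ)
    (hc : ∀ i ∈ S, 0 ≤ c i) (ha : ∀ i ∈ S, ∃ j, a i j ≠ 0)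
    (f : (Fin n → ℝ) → ℝ)
    (hf : f = fun x => ∑ i ∈ S, c i * ∏ j, |x j| ^ (a i j)) :
    (∀ x, f 0 ≤ f x) ∧
      ∀ α ∈ Set.Icc (0:ℝ) 1, ∀ x,
        f ((1 - α) • x) ≤ (1 - α) * f x + α * f 0 := by
  have hf0 : f 0 = 0 := by
    rw [hf]
    exact Finset.sum_eq_zero fun i hi => by rw [prod_abs_pow_zero (ha i hi), mul_zero]
  refine ⟨fun x => ?_, fun α ⟨hα₀, hα₁⟩ x => ?_⟩
  · rw [hf0, hf]
    exact Finset.sum_nonneg fun i hi => mul_nonneg (hc i hi) (prod_abs_pow_nonneg _ x)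
  · rw [hf0, mul_zero, add_zero, hf, Finset.mul_sum]
    refine Finset.sum_le_sum fun i hi => ?_
    rw [mul_left_comm]
    exact mul_le_mul_of_nonneg_left
      (prod_abs_pow_smul_le (ha i hi) (by linarith) (by linarith) x) (hc i hi)
end

section
/- In ℝ^n (n ≥ 1), the ellipsoid E = { x : (x₁ - 2/(3(n+1)))² / (1 - 2/(3(n+1)))² + ((n²-1)/n²)·Σ_{i≠1} x_i² ≤ 1 } contains the intersection of the closed unit ball with the half-space { x : x₁ ≥ -1/(3n) }. -/
/-!
Writing `t = x₀` and `S` for the sum of the remaining squares, the left-hand side is increasing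
in `S ≤ 1 - t²`, so it suffices to treat `S = 1 - t²`. There the left-hand side minus `1` is a
quadratic in `t` with positive leading coefficient vanishing at `t = 1` and at
`t = -(5N+1)/(12N²+5N+1) ≤ -1/(3N)`, hence it is nonpositive on `[-1/(3N), 1]`.
-/

lemma ellipsoid_profile_sub_one {N : ℝ} (hN : 0 < N) (t : ℝ) :
    (t - 2 / (3 * (N + 1))) ^ 2 / (1 - 2 / (3 * (N + 1))) ^ 2
      + ((N ^ 2 - 1) / N ^ 2) * (1 - t ^ 2) - 1
      = (t - 1) * ((N + 1) * ((12 * N ^ 2 + 5 * N + 1) * t + 5 * N + 1))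
        / (N ^ 2 * (3 * N + 1) ^ 2) := by
  have hk : (1 : ℝ) - 2 / (3 * (N + 1)) = (3 * N + 1) / (3 * (N + 1)) := by
    field_simp
    ring
  rw [hk]
  field_simp
  ring

lemma ellipsoid_profile_le_one {N t : ℝ} (hN : 1 ≤ N) (ht : -(1 / (3 * N)) ≤ t) (ht1 : t ≤ 1) :
    (t - 2 / (3 * (N + 1))) ^ 2 / (1 - 2 / (3 * (N + 1))) ^ 2
      + ((N ^ 2 - 1) / N ^ 2) * (1 - t ^ 2) ≤ 1 := by
  have hN0 : 0 < N := by linarith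
  have hcut : 0 ≤ 3 * N * t + 1 := by
    rw [neg_le_iff_add_nonneg] at ht
    have hscale : 3 * N * t + 1 = 3 * N * (t + 1 / (3 * N)) := by field_simp
    exact hscale ▸ mul_nonneg (by positivity) ht
  -- `3N · (second factor) = (12N²+5N+1)(3Nt+1) + (3N+1)(N-1)`
  have hfactor : 0 ≤ (12 * N ^ 2 + 5 * N + 1) * t + 5 * N + 1 := by
    nlinarith [mul_nonneg (by positivity : (0 : ℝ) ≤ 12 * N ^ 2 + 5 * N + 1) hcut]
  have h := ellipsoid_profile_sub_one hN0 t
  have : (t - 1) * ((N + 1) * ((12 * N ^ 2 + 5 * N + 1) * t + 5 * N + 1))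
      / (N ^ 2 * (3 * N + 1) ^ 2) ≤ 0 :=
    div_nonpos_of_nonpos_of_nonneg
      (mul_nonpos_of_nonpos_of_nonneg (by linarith) (by positivity)) (by positivity)
  linarith

lemma ellipsoid_bound_of_sq_add_le_one {N t S : ℝ} (hN : 1 ≤ N) (hS : 0 ≤ S)
    (hball : t ^ 2 + S ≤ 1) (hcut : -(1 / (3 * N)) ≤ t) :
    (t - 2 / (3 * (N + 1))) ^ 2 / (1 - 2 / (3 * (N + 1))) ^ 2
      + ((N ^ 2 - 1) / N ^ 2) * S ≤ 1 := by
  have ht1 : t ≤ 1 := by nlinarith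
  have hcoeff : 0 ≤ (N ^ 2 - 1) / N ^ 2 := div_nonneg (by nlinarith) (by positivity)
  calc _ ≤ (t - 2 / (3 * (N + 1))) ^ 2 / (1 - 2 / (3 * (N + 1))) ^ 2
          + ((N ^ 2 - 1) / N ^ 2) * (1 - t ^ 2) := by gcongr; linarith
    _ ≤ 1 := ellipsoid_profile_le_one hN hcut ht1

theorem stmt10 (n : ℕ) (hn : 0 < n) (x : Fin n → ℝ)
    (hball : ∑ i, (x i) ^ 2 ≤ 1)
    (hcut : -(1 / (3 * n)) ≤ x ⟨0, hn⟩) :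
    (x ⟨0, hn⟩ - 2 / (3 * (n + 1))) ^ 2 / (1 - 2 / (3 * (n + 1))) ^ 2
      + (((n : ℝ) ^ 2 - 1) / (n : ℝ) ^ 2)
        * ∑ i ∈ Finset.univ.filter (· ≠ (⟨0, hn⟩ : Fin n)), (x i) ^ 2 ≤ 1 := by
  have hsplit : x ⟨0, hn⟩ ^ 2 + ∑ i ∈ Finset.univ.filter (· ≠ (⟨0, hn⟩ : Fin n)), x i ^ 2
      = ∑ i, x i ^ 2 := by
    rw [Finset.filter_ne', Finset.add_sum_erase _ (fun i => x i ^ 2) (Finset.mem_univ _)]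
  exact ellipsoid_bound_of_sq_add_le_one (by exact_mod_cast hn)
    (Finset.sum_nonneg fun i _ => sq_nonneg (x i)) (hsplit.trans_le hball) hcut
end

section
/- For every integer n ≥ 1 and real x₁ ∈ [-1/(3n), 1], the quadratic f(x₁) = (x₁ - 2/(3(n+1)))²/(1 - 2/(3(n+1)))² + ((n²-1)/n²)·(1 - x₁²) satisfies f(x₁) ≤ 1. -/
/-!
Clearing denominators, `1 - f(x)` factors as `(n+1)(1 - x)((12n²+5n+1)x + 5n+1) / ((3n+1)² n²)`,
so `f(x) = 1` exactly at `x = 1` and `x = -(5n+1)/(12n²+5n+1)`, and `f ≤ 1` between these roots.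
The left end `-1/(3n)` of the interval lies between them because
`(5n+1)/(12n²+5n+1) - 1/(3n) = (3n+1)(n-1) / (3n(12n²+5n+1)) ≥ 0`.
-/

namespace EllipsoidCut

/-- The quadratic `f` of the ellipsoid cut, with the dimension `n` as a real parameter `t`. -/
noncomputable def cutQuadratic (t x : ℝ) : ℝ :=
  (x - 2 / (3 * (t + 1))) ^ 2 / (1 - 2 / (3 * (t + 1))) ^ 2 + ((t ^ 2 - 1) / t ^ 2) * (1 - x ^ 2)

theorem one_sub_cutQuadratic {t : ℝ} (ht : 0 < t) (x : ℝ) :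
    1 - cutQuadratic t x
      = (t + 1) * ((1 - x) * ((12 * t ^ 2 + 5 * t + 1) * x + (5 * t + 1)))
          / ((3 * t + 1) ^ 2 * t ^ 2) := by
  have hshift : 1 - 2 / (3 * (t + 1)) = (3 * t + 1) / (3 * (t + 1)) := by
    field_simp
    ring
  have : 3 * t + 1 ≠ 0 := by positivity
  rw [cutQuadratic, hshift]
  field_simp
  ring

theorem inv_three_mul_le_root {t : ℝ} (ht : 1 ≤ t) :
    1 / (3 * t) ≤ (5 * t + 1) / (12 * t ^ 2 + 5 * t + 1) := by
  rw [div_le_div_iff₀ (by positivity) (by positivity)]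
  nlinarith

theorem cutQuadratic_le_one {t x : ℝ} (ht : 1 ≤ t) (hx : x ∈ Set.Icc (-(1 / (3 * t))) 1) :
    cutQuadratic t x ≤ 1 := by
  have htpos : 0 < t := by linarith
  have hlead : 0 < 12 * t ^ 2 + 5 * t + 1 := by positivity
  have hroot : -((5 * t + 1) / (12 * t ^ 2 + 5 * t + 1)) ≤ x :=
    le_trans (neg_le_neg (inv_three_mul_le_root ht)) hx.1
  have hlinear : 0 ≤ (12 * t ^ 2 + 5 * t + 1) * x + (5 * t + 1) := by
    rw [← neg_div, div_le_iff₀ hlead] at hroot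
    linarith
  rw [← sub_nonneg, one_sub_cutQuadratic htpos]
  have : 0 ≤ 1 - x := sub_nonneg.mpr hx.2
  positivity

end EllipsoidCut

theorem stmt11 (n : ℕ) (hn : 1 ≤ n) (x : ℝ)
    (hx : x ∈ Set.Icc (-(1 / (3 * (n : ℝ)))) 1) :
    (x - 2 / (3 * ((n : ℝ) + 1))) ^ 2 / (1 - 2 / (3 * ((n : ℝ) + 1))) ^ 2
      + (((n : ℝ) ^ 2 - 1) / (n : ℝ) ^ 2) * (1 - x ^ 2) ≤ 1 :=
  EllipsoidCut.cutQuadratic_le_one (by exact_mod_cast hn) hx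
end

section
/- For every integer n ≥ 1, (1 - 2/(3(n+1))) · (n²/(n²-1))^{(n-1)/2} < e^{-1/(6(n+1))}. -/
/-!
Bound the two factors separately by exponentials: `1 - t < exp (-t)` for the first, and
`x² / (x² - 1) = 1 + 1 / (x² - 1) ≤ exp (1 / (x² - 1))` for the base of the second. Since
`x² - 1 = (x - 1)(x + 1)`, the exponents add up to `-2 / (3(x + 1)) + 1 / (2(x + 1)) = -1 / (6(x + 1))`.
-/

open Real

lemma one_add_rpow_le_exp_mul {t p : ℝ} (ht : -1 ≤ t) (hp : 0 ≤ p) :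
    (1 + t) ^ p ≤ exp (t * p) := by
  rw [exp_mul]
  exact rpow_le_rpow (by linarith) (by linarith [add_one_le_exp t]) hp

lemma sq_div_sq_sub_one_rpow_le_exp {x : ℝ} (hx : 1 ≤ x) :
    (x ^ 2 / (x ^ 2 - 1)) ^ ((x - 1) / 2) ≤ exp (1 / (2 * (x + 1))) := by
  rcases hx.eq_or_lt with rfl | hx
  · norm_num
  have hsq : 0 < x ^ 2 - 1 := by nlinarith
  have hbase : x ^ 2 / (x ^ 2 - 1) = 1 + 1 / (x ^ 2 - 1) := by field_simp; ring
  have hexp : 1 / (x ^ 2 - 1) * ((x - 1) / 2) = 1 / (2 * (x + 1)) := by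
    rw [show x ^ 2 - 1 = (x - 1) * (x + 1) by ring]
    field_simp [(sub_pos.2 hx).ne']
  rw [hbase, ← hexp]
  exact one_add_rpow_le_exp_mul (by linarith [one_div_pos.2 hsq]) (by linarith)

theorem stmt12 (n : ℕ) (hn : 1 ≤ n) :
    (1 - 2 / (3 * ((n : ℝ) + 1)))
        * ((n : ℝ) ^ 2 / ((n : ℝ) ^ 2 - 1)) ^ (((n : ℝ) - 1) / 2)
      < Real.exp (-(1 / (6 * ((n : ℝ) + 1)))) := by
  set x : ℝ := (n : ℝ)
  have hx : 1 ≤ x := Nat.one_le_cast.2 hn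
  have hfirst_pos : 0 < 1 - 2 / (3 * (x + 1)) := by
    rw [sub_pos, div_lt_one (by positivity)]
    linarith
  calc (1 - 2 / (3 * (x + 1))) * (x ^ 2 / (x ^ 2 - 1)) ^ ((x - 1) / 2)
      ≤ (1 - 2 / (3 * (x + 1))) * exp (1 / (2 * (x + 1))) :=
        mul_le_mul_of_nonneg_left (sq_div_sq_sub_one_rpow_le_exp hx) hfirst_pos.le
    _ < exp (-(2 / (3 * (x + 1)))) * exp (1 / (2 * (x + 1))) :=
        mul_lt_mul_of_pos_right (one_sub_lt_exp_neg (by positivity)) (exp_pos _)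
    _ = exp (-(1 / (6 * (x + 1)))) := by
        rw [← exp_add]
        congr 1
        field_simp
        ring
end

section
/- Let c ≥ 0, n ≥ 1, and consider the probability distribution on (0,∞) with density proportional to f(x) = e^{-(x-c)²/2} x^{n-1}. Let m = (c + √(c² + 4(n-1)))/2 be the mode. Then f(x) ≤ f(m)·e^{-(x-m)²/2} for all x > 0, and f(x) ≥ f(m)·e^{-(x-m)²} for all x ≥ m. -/
/-!
On `x > 0`, `f = exp ∘ φ` with `φ x = -(x - c)² / 2 + k log x`, `k = n - 1`. The mode `m` is the
root of `m² = c m + k`, so the linearisation `k (x / m - 1)` of `k log (x / m)` equals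
`(m - c)(x - m)` and cancels the linear term of `φ x - φ m`. The upper bound is
`log u ≤ u - 1`; for the lower bound, `log u ≥ (u - 1) - (u - 1)² / 2` on `u ≥ 1` together with
`k ≤ m²` costs at most a further `(x - m)² / 2`.
-/

open Real

lemma Real.sub_sq_div_two_le_log_one_add {v : ℝ} (hv : 0 ≤ v) : v - v ^ 2 / 2 ≤ log (1 + v) := by
  refine le_trans ?_ (le_log_one_add_of_nonneg hv)
  rw [le_div_iff₀ (by linarith)]
  nlinarith [sq_nonneg v]

lemma sq_eq_mul_add_of_eq_quadratic_root {c k m : ℝ} (hd : 0 ≤ c ^ 2 + 4 * k)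
    (hm : m = (c + √(c ^ 2 + 4 * k)) / 2) : m ^ 2 = c * m + k := by
  have hroot : (2 * m - c) ^ 2 = c ^ 2 + 4 * k := by
    rw [show 2 * m - c = √(c ^ 2 + 4 * k) by rw [hm]; ring, sq_sqrt hd]
  linarith

lemma le_of_eq_quadratic_root {c k m : ℝ} (hk : 0 ≤ k)
    (hm : m = (c + √(c ^ 2 + 4 * k)) / 2) : c ≤ m := by
  have : c ≤ √(c ^ 2 + 4 * k) := (le_abs_self c).trans (abs_le_sqrt (by linarith))
  linarith

noncomputable def logDensity (c k x : ℝ) : ℝ := -(x - c) ^ 2 / 2 + k * log x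

lemma exp_logDensity (c : ℝ) (n : ℕ) {x : ℝ} (hx : 0 < x) :
    exp (logDensity c n x) = exp (-(x - c) ^ 2 / 2) * x ^ n := by
  rw [logDensity, exp_add, ← log_pow, exp_log (pow_pos hx n)]

section Mode

variable {c k m x : ℝ} (hm : 0 < m) (hmode : m ^ 2 = c * m + k)
include hm hmode

lemma mul_div_sub_one_of_mode : k * (x / m - 1) = (m - c) * (x - m) := by
  rw [show k = m ^ 2 - c * m by linarith]
  field_simp

lemma logDensity_eq_of_mode :
    logDensity c k x = logDensity c k m - (x - m) ^ 2 / 2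
      + (k * (log x - log m) - k * (x / m - 1)) := by
  rw [logDensity, logDensity, mul_div_sub_one_of_mode hm hmode]
  ring

lemma logDensity_le_of_mode (hk : 0 ≤ k) (hx : 0 < x) :
    logDensity c k x ≤ logDensity c k m - (x - m) ^ 2 / 2 := by
  have hlog : k * (log x - log m) ≤ k * (x / m - 1) := by
    rw [← log_div hx.ne' hm.ne']
    exact mul_le_mul_of_nonneg_left (log_le_sub_one_of_pos (div_pos hx hm)) hk
  rw [logDensity_eq_of_mode (x := x) hm hmode]
  linarith

lemma logDensity_ge_of_mode (hc : 0 ≤ c) (hk : 0 ≤ k) (hx : m ≤ x) :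
    logDensity c k m - (x - m) ^ 2 ≤ logDensity c k x := by
  have hv : 0 ≤ x / m - 1 := by rw [sub_nonneg, one_le_div hm]; exact hx
  have hkm : k ≤ m ^ 2 := by nlinarith
  have hlog : k * (x / m - 1) - (x - m) ^ 2 / 2 ≤ k * (log x - log m) := by
    rw [← log_div (by linarith) hm.ne']
    calc k * (x / m - 1) - (x - m) ^ 2 / 2
        = k * (x / m - 1) - m ^ 2 * (x / m - 1) ^ 2 / 2 := by field_simp
      _ ≤ k * ((x / m - 1) - (x / m - 1) ^ 2 / 2) := by nlinarith [sq_nonneg (x / m - 1)]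
      _ ≤ k * log (x / m) := by
        gcongr
        simpa using sub_sq_div_two_le_log_one_add hv
  rw [logDensity_eq_of_mode (x := x) hm hmode]
  linarith

end Mode

theorem stmt14 (n : ℕ) (hn : 1 ≤ n) (c : ℝ) (hc : 0 ≤ c)
    (f : ℝ → ℝ)
    (hf : f = fun x => Real.exp (-(x - c) ^ 2 / 2) * x ^ (n - 1))
    (m : ℝ) (hm : m = (c + Real.sqrt (c ^ 2 + 4 * ((n : ℝ) - 1))) / 2) :
    (∀ x > (0:ℝ), f x ≤ f m * Real.exp (-(x - m) ^ 2 / 2)) ∧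
      (∀ x ≥ m, f m * Real.exp (-(x - m) ^ 2) ≤ f x) := by
  subst hf
  have hk : ((n - 1 : ℕ) : ℝ) = (n : ℝ) - 1 := by rw [Nat.cast_sub hn, Nat.cast_one]
  rw [← hk] at hm
  have hmode := sq_eq_mul_add_of_eq_quadratic_root (by positivity) hm
  have hcm := le_of_eq_quadratic_root (Nat.cast_nonneg _) hm
  rcases (hc.trans hcm).eq_or_lt with rfl | hm0
  · obtain rfl : c = 0 := le_antisymm hcm hc
    have hk0 : n - 1 = 0 := by exact_mod_cast (by linarith : ((n - 1 : ℕ) : ℝ) = 0)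
    refine ⟨fun x _ => by simp [hk0], fun x _ => ?_⟩
    simpa [hk0] using exp_le_exp.mpr (by nlinarith [sq_nonneg x] : -x ^ 2 ≤ -x ^ 2 / 2)
  refine ⟨fun x hx => ?_, fun x hx => ?_⟩
  · simp only
    rw [← exp_logDensity c _ hx, ← exp_logDensity c _ hm0, ← exp_add, exp_le_exp]
    linarith [logDensity_le_of_mode hm0 hmode (Nat.cast_nonneg _) hx]
  · simp only
    rw [← exp_logDensity c _ (hm0.trans_le hx), ← exp_logDensity c _ hm0, ← exp_add, exp_le_exp]
    linarith [logDensity_ge_of_mode hm0 hmode hc (Nat.cast_nonneg _) hx]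
end

section
/- Let c ≥ 0 and n ≥ 1, and let μ be the probability measure on (0,∞) with density proportional to e^{-(x-c)²/2} x^{n-1}. Then any measurable set S ⊆ (0,∞) with μ(S) ≥ 0.9 contains two points whose ratio is at least 1 + 1/(6·max{c, √n}). -/
/-!
With `k = n - 1`, the density `f x = exp (-(x - c) ^ 2 / 2) * x ^ k` peaks at the positive root `m`
of `m (m - c) = k`, and around `m` it is squeezed between two Gaussians:
`f m * exp (-(x - m) ^ 2) ≤ f x` for `x ≥ m` and `f x ≤ f m * exp (-(x - m) ^ 2 / 2)` for `x ≥ 0`.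
So the total mass is at most `f m * √(2π)`, while `(m, m + 1/3]` and `(m + 2/3, ∞)` each carry more
than a tenth of it. A set of measure at least `0.9` meets both intervals, and the ratio of the two
points is at least `(m + 2/3) / (m + 1/3) = 1 + 1 / (3m + 1) ≥ 1 + 1 / (6 max c √n)`.
-/

open Real MeasureTheory Set

lemma Real.exp_sub_sq_div_two_le_one_add {u : ℝ} (hu : 0 ≤ u) : exp (u - u ^ 2 / 2) ≤ 1 + u := by
  rw [← le_log_iff_exp_le (by linarith)]
  refine le_trans ?_ (le_log_one_add_of_nonneg hu)
  rw [le_div_iff₀ (by linarith)]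
  nlinarith [pow_nonneg hu 3]

lemma Real.exp_neg_le_one_sub_add_sq_div_two {u : ℝ} (hu : 0 ≤ u) :
    exp (-u) ≤ 1 - u + u ^ 2 / 2 := by
  rw [exp_neg, inv_le_iff_one_le_mul₀ (exp_pos u)]
  calc (1 : ℝ) ≤ (1 - u + u ^ 2 / 2) * (1 + u + u ^ 2 / 2) := by nlinarith [pow_nonneg hu 4]
    _ ≤ (1 - u + u ^ 2 / 2) * exp u := by
      gcongr
      · nlinarith [sq_nonneg (u - 1)]
      · exact quadratic_le_exp_of_nonneg hu

lemma integral_exp_neg_sq_div_two_comp_sub (m : ℝ) :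
    ∫ x, exp (-(x - m) ^ 2 / 2) = √(2 * π) := by
  calc ∫ x, exp (-(x - m) ^ 2 / 2) = ∫ x, exp (-(1 / 2) * (x - m) ^ 2) := by
        congr with x
        ring_nf
    _ = √(2 * π) := by
        rw [integral_sub_right_eq_self (fun x => exp (-(1 / 2) * x ^ 2)) m, integral_gaussian]
        ring_nf

lemma integrable_exp_neg_sq_div_two_comp_sub (m : ℝ) :
    Integrable fun x => exp (-(x - m) ^ 2 / 2) := by
  convert (integrable_exp_neg_mul_sq (b := 1 / 2) (by norm_num)).comp_sub_right m using 3
  ring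

lemma integrable_exp_neg_sq_comp_sub (m : ℝ) :
    Integrable fun x => exp (-(x - m) ^ 2) := by
  simpa using (integrable_exp_neg_mul_sq one_pos).comp_sub_right m

lemma sqrt_two_pi_div_ten_lt_integral_Ioc :
    √(2 * π) / 10 < ∫ t in Ioc 0 (1 / 3), exp (-t ^ 2) := by
  have hsqrt : √(2 * π) < 260 / 81 := by
    rw [sqrt_lt' (by norm_num)]
    nlinarith [pi_lt_d2]
  have hpoly : ∫ t in (0 : ℝ)..1 / 3, (1 - t ^ 2) = 26 / 81 := by
    norm_num [intervalIntegral.integral_sub, integral_pow]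
  rw [← intervalIntegral.integral_of_le (by norm_num)]
  calc √(2 * π) / 10 < 26 / 81 := by linarith
    _ ≤ ∫ t in (0 : ℝ)..1 / 3, exp (-t ^ 2) := by
      rw [← hpoly]
      refine intervalIntegral.integral_mono_on (by norm_num)
        (Continuous.intervalIntegrable (by fun_prop) _ _)
        (Continuous.intervalIntegrable (by fun_prop) _ _) fun t _ => ?_
      linarith [add_one_le_exp (-t ^ 2)]

lemma sqrt_two_pi_div_ten_lt_integral_Ioi :
    √(2 * π) / 10 < ∫ t in Ioi (2 / 3), exp (-t ^ 2) := by
  have hint : IntegrableOn (fun t : ℝ => exp (-t ^ 2)) (Ioi 0) := by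
    simpa using (integrable_exp_neg_mul_sq one_pos).integrableOn
  have hhalf : ∫ t in Ioi (0 : ℝ), exp (-t ^ 2) = √π / 2 := by
    simpa using integral_gaussian_Ioi 1
  have hpoly : ∫ t in (0 : ℝ)..2 / 3, exp (-t ^ 2) ≤ 706 / 1215 := by
    calc ∫ t in (0 : ℝ)..2 / 3, exp (-t ^ 2)
        ≤ ∫ t in (0 : ℝ)..2 / 3, (1 - t ^ 2 + (t ^ 2) ^ 2 / 2) :=
          intervalIntegral.integral_mono_on (by norm_num)
            (Continuous.intervalIntegrable (by fun_prop) _ _)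
            (Continuous.intervalIntegrable (by fun_prop) _ _)
            fun t _ => exp_neg_le_one_sub_add_sq_div_two (sq_nonneg t)
      _ = 706 / 1215 := by
          norm_num [← pow_mul, intervalIntegral.integral_sub, intervalIntegral.integral_add,
            intervalIntegral.integral_div, integral_pow]
  have hpi : 1.77 < √π := by
    rw [lt_sqrt (by norm_num)]
    nlinarith [pi_gt_d2]
  have htwo : √2 < 1.415 := by
    rw [sqrt_lt' (by norm_num)]
    norm_num
  have hsplit := intervalIntegral.integral_Ioi_sub_Ioi hint (by norm_num : (0 : ℝ) ≤ 2 / 3)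
  -- `√π / 2 - 706 / 1215 > √2 * √π / 10` because `1.77 * (1 / 2 - 1.415 / 10) > 706 / 1215`
  rw [sqrt_mul (by norm_num)]
  nlinarith [sqrt_nonneg π]

noncomputable def gaussPow (c : ℝ) (k : ℕ) (x : ℝ) : ℝ := exp (-(x - c) ^ 2 / 2) * x ^ k

/-- The maximiser of `gaussPow c k` on `[0, ∞)`: the positive root of `m (m - c) = k`. -/
noncomputable def gaussPowMode (c : ℝ) (k : ℕ) : ℝ := (c + √(c ^ 2 + 4 * k)) / 2

section Mode

variable (c : ℝ) (k : ℕ)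

lemma gaussPowMode_mul_sub : gaussPowMode c k * (gaussPowMode c k - c) = k := by
  have := sq_sqrt (by positivity : 0 ≤ c ^ 2 + 4 * k)
  unfold gaussPowMode
  linear_combination this / 4

variable {c k}

lemma gaussPowMode_nonneg (hc : 0 ≤ c) : 0 ≤ gaussPowMode c k := by
  unfold gaussPowMode
  positivity

lemma gaussPowMode_pos (hk : k ≠ 0) : 0 < gaussPowMode c k := by
  have hk' : (0 : ℝ) < k := by positivity
  have := sq_sqrt (by positivity : 0 ≤ c ^ 2 + 4 * k)
  unfold gaussPowMode
  nlinarith [sqrt_nonneg (c ^ 2 + 4 * k)]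

lemma gaussPowMode_zero (hc : 0 ≤ c) : gaussPowMode c 0 = c := by
  simp [gaussPowMode, sqrt_sq hc]

lemma three_mul_gaussPowMode_sub_one_add_one_le {n : ℕ} (hn : 1 ≤ n) (hc : 0 ≤ c) :
    3 * gaussPowMode c (n - 1) + 1 ≤ 6 * max c √n := by
  set M := max c √n
  have hcM : c ≤ M := le_max_left _ _
  have hM1 : 1 ≤ M := le_max_of_le_right (one_le_sqrt.2 (by exact_mod_cast hn))
  have hnM : (n : ℝ) ≤ M ^ 2 := (sqrt_le_left (by positivity)).1 (le_max_right _ _)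
  have hsqrt : √(c ^ 2 + 4 * ((n - 1 : ℕ) : ℝ)) ≤ 7 / 3 * M := by
    rw [sqrt_le_left (by positivity), Nat.cast_sub hn]
    push_cast
    nlinarith
  unfold gaussPowMode
  linarith

end Mode

section Density

variable {c : ℝ} {k : ℕ}

lemma gaussPow_nonneg {x : ℝ} (hx : 0 ≤ x) : 0 ≤ gaussPow c k x := by
  unfold gaussPow
  positivity

lemma gaussPow_mode_pos : 0 < gaussPow c k (gaussPowMode c k) := by
  rcases Nat.eq_zero_or_pos k with rfl | hk
  · simp [gaussPow, exp_pos]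
  · have := gaussPowMode_pos (c := c) hk.ne'
    unfold gaussPow
    positivity

lemma gaussPow_le_mul_exp (hc : 0 ≤ c) {x : ℝ} (hx : 0 ≤ x) :
    gaussPow c k x ≤ gaussPow c k (gaussPowMode c k) * exp (-(x - gaussPowMode c k) ^ 2 / 2) := by
  set m := gaussPowMode c k
  rcases Nat.eq_zero_or_pos k with rfl | hk
  · simp [gaussPow, m, gaussPowMode_zero hc]
  have hm : 0 < m := gaussPowMode_pos hk.ne'
  have hmk : m * (m - c) = k := gaussPowMode_mul_sub c k
  have hpow : (x / m) ^ k ≤ exp ((m - c) * (x - m)) := by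
    calc (x / m) ^ k ≤ exp (x / m - 1) ^ k := by
          gcongr
          linarith [add_one_le_exp (x / m - 1)]
      _ = exp ((m - c) * (x - m)) := by
          rw [← exp_nat_mul, ← hmk]
          field_simp
  have hexp : -(x - c) ^ 2 / 2 + (m - c) * (x - m) = -(m - c) ^ 2 / 2 + -(x - m) ^ 2 / 2 := by
    ring
  calc gaussPow c k x = exp (-(x - c) ^ 2 / 2) * m ^ k * (x / m) ^ k := by
        rw [gaussPow, mul_assoc, ← mul_pow, mul_div_cancel₀ _ hm.ne']
    _ ≤ exp (-(x - c) ^ 2 / 2) * m ^ k * exp ((m - c) * (x - m)) := by gcongr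
    _ = gaussPow c k m * exp (-(x - m) ^ 2 / 2) := by
        rw [gaussPow, mul_right_comm, ← exp_add, hexp, exp_add]
        ring

lemma gaussPow_mode_mul_exp_le (hc : 0 ≤ c) {x : ℝ} (hx : gaussPowMode c k ≤ x) :
    gaussPow c k (gaussPowMode c k) * exp (-(x - gaussPowMode c k) ^ 2) ≤ gaussPow c k x := by
  set m := gaussPowMode c k
  rcases Nat.eq_zero_or_pos k with rfl | hk
  · simp only [gaussPow, m, gaussPowMode_zero hc, sub_self, pow_zero, mul_one]
    rw [← exp_add, exp_le_exp]
    nlinarith [sq_nonneg (x - c)]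
  have hm : 0 < m := gaussPowMode_pos hk.ne'
  have hmk : m * (m - c) = k := gaussPowMode_mul_sub c k
  set u := (x - m) / m with hu_def
  have hu : 0 ≤ u := div_nonneg (by linarith) hm.le
  have hpow : exp ((m - c) * (x - m) - (m - c) * (x - m) ^ 2 / (2 * m)) ≤ (x / m) ^ k := by
    calc exp ((m - c) * (x - m) - (m - c) * (x - m) ^ 2 / (2 * m))
        = exp (u - u ^ 2 / 2) ^ k := by
          rw [← exp_nat_mul, ← hmk, hu_def]
          field_simp
      _ ≤ (1 + u) ^ k := by gcongr; exact exp_sub_sq_div_two_le_one_add hu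
      _ = (x / m) ^ k := by
          rw [hu_def]
          field_simp
          ring
  have hexp : -(m - c) ^ 2 / 2 - (x - m) ^ 2
      ≤ -(x - c) ^ 2 / 2 + ((m - c) * (x - m) - (m - c) * (x - m) ^ 2 / (2 * m)) := by
    have : (m - c) * (x - m) ^ 2 / (2 * m) = (x - m) ^ 2 / 2 - c * (x - m) ^ 2 / (2 * m) := by
      field_simp
    rw [this]
    nlinarith [div_nonneg (mul_nonneg hc (sq_nonneg (x - m))) (by positivity : (0 : ℝ) ≤ 2 * m)]
  calc gaussPow c k m * exp (-(x - m) ^ 2) = m ^ k * exp (-(m - c) ^ 2 / 2 - (x - m) ^ 2) := by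
        rw [gaussPow, sub_eq_add_neg _ ((x - m) ^ 2), exp_add]
        ring
    _ ≤ m ^ k * exp (-(x - c) ^ 2 / 2 + ((m - c) * (x - m) - (m - c) * (x - m) ^ 2 / (2 * m))) := by
        gcongr
    _ = exp (-(x - c) ^ 2 / 2) * m ^ k *
          exp ((m - c) * (x - m) - (m - c) * (x - m) ^ 2 / (2 * m)) := by
        rw [exp_add]
        ring
    _ ≤ exp (-(x - c) ^ 2 / 2) * m ^ k * (x / m) ^ k := by gcongr
    _ = gaussPow c k x := by rw [gaussPow, mul_assoc, ← mul_pow, mul_div_cancel₀ _ hm.ne']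

end Density

section Integrals

variable {c : ℝ} {k : ℕ}

lemma integrableOn_gaussPow (hc : 0 ≤ c) : IntegrableOn (gaussPow c k) (Ici 0) := by
  refine Integrable.mono'
    ((integrable_exp_neg_sq_div_two_comp_sub (gaussPowMode c k)).const_mul
      (gaussPow c k (gaussPowMode c k))).integrableOn
    (Continuous.aestronglyMeasurable (by unfold gaussPow; fun_prop)) ?_
  filter_upwards [ae_restrict_mem measurableSet_Ici] with x hx
  rw [norm_of_nonneg (gaussPow_nonneg hx)]
  exact gaussPow_le_mul_exp hc hx

lemma integral_gaussPow_le (hc : 0 ≤ c) :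
    ∫ x in Ioi 0, gaussPow c k x ≤ gaussPow c k (gaussPowMode c k) * √(2 * π) := by
  set m := gaussPowMode c k
  have hg := (integrable_exp_neg_sq_div_two_comp_sub m).const_mul (gaussPow c k m)
  calc ∫ x in Ioi 0, gaussPow c k x ≤ ∫ x in Ioi 0, gaussPow c k m * exp (-(x - m) ^ 2 / 2) :=
        setIntegral_mono_on ((integrableOn_gaussPow hc).mono_set Ioi_subset_Ici_self)
          hg.integrableOn measurableSet_Ioi fun x hx => gaussPow_le_mul_exp hc (le_of_lt hx)
    _ ≤ ∫ x, gaussPow c k m * exp (-(x - m) ^ 2 / 2) :=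
        setIntegral_le_integral hg (ae_of_all _ fun _ =>
          mul_nonneg (gaussPow_nonneg (gaussPowMode_nonneg hc)) (exp_pos _).le)
    _ = gaussPow c k m * √(2 * π) := by
        rw [integral_const_mul, integral_exp_neg_sq_div_two_comp_sub]

lemma gaussPow_mode_mul_integral_le (hc : 0 ≤ c) {s : Set ℝ} (hs : MeasurableSet s)
    (hs0 : s ⊆ Ici 0) :
    gaussPow c k (gaussPowMode c k) * ∫ t in s, exp (-t ^ 2)
      ≤ ∫ x in (· - gaussPowMode c k) ⁻¹' s, gaussPow c k x := by
  set m := gaussPowMode c k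
  have hpre : (· - m) ⁻¹' s ⊆ Ici m := fun x hx => mem_Ici.2 (sub_nonneg.1 (hs0 hx))
  calc gaussPow c k m * ∫ t in s, exp (-t ^ 2)
      = ∫ x in (· - m) ⁻¹' s, gaussPow c k m * exp (-(x - m) ^ 2) := by
        rw [integral_const_mul, (measurePreserving_sub_right volume m).setIntegral_preimage_emb
          (measurableEmbedding_subRight m) (fun t => exp (-t ^ 2)) s]
    _ ≤ ∫ x in (· - m) ⁻¹' s, gaussPow c k x :=
        setIntegral_mono_on ((integrable_exp_neg_sq_comp_sub m).const_mul _).integrableOn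
          ((integrableOn_gaussPow hc).mono_set
            (hpre.trans (Ici_subset_Ici.2 (gaussPowMode_nonneg hc))))
          (hs.preimage (measurable_sub_const m))
          fun x hx => gaussPow_mode_mul_exp_le hc (hpre hx)

lemma integral_gaussPow_div_ten_lt (hc : 0 ≤ c) {s : Set ℝ} (hs : MeasurableSet s)
    (hs0 : s ⊆ Ici 0) (hmass : √(2 * π) / 10 < ∫ t in s, exp (-t ^ 2)) :
    (∫ x in Ioi 0, gaussPow c k x) / 10
      < ∫ x in (· - gaussPowMode c k) ⁻¹' s, gaussPow c k x := by
  have hpos : 0 < gaussPow c k (gaussPowMode c k) := gaussPow_mode_pos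
  calc (∫ x in Ioi 0, gaussPow c k x) / 10
      ≤ gaussPow c k (gaussPowMode c k) * (√(2 * π) / 10) := by
        rw [← mul_div_assoc]
        gcongr
        exact integral_gaussPow_le hc
    _ < gaussPow c k (gaussPowMode c k) * ∫ t in s, exp (-t ^ 2) := by gcongr
    _ ≤ _ := gaussPow_mode_mul_integral_le hc hs hs0

end Integrals

lemma nonempty_inter_of_integral_div_ten_lt {α : Type*} [MeasurableSpace α] {ν : Measure α}
    {f : α → ℝ} (hf : Integrable f ν) (hf0 : 0 ≤ᵐ[ν] f) {S I : Set α} (hI : MeasurableSet I)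
    (hS : 9 / 10 ≤ ν.withDensity (fun x => ENNReal.ofReal (f x / ∫ y, f y ∂ν)) S)
    (hmass : (∫ y, f y ∂ν) / 10 < ∫ x in I, f x ∂ν) :
    (S ∩ I).Nonempty := by
  set Z := ∫ y, f y ∂ν
  set μ := ν.withDensity fun x => ENNReal.ofReal (f x / Z)
  have hZ : 0 < Z := by linarith [setIntegral_le_integral (s := I) hf hf0]
  have happly : ∀ A, MeasurableSet A → μ A = ENNReal.ofReal ((∫ x in A, f x ∂ν) / Z) := by
    intro A hA
    rw [withDensity_apply _ hA, ← ofReal_integral_eq_lintegral_ofReal (hf.integrableOn.div_const Z)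
      (ae_restrict_of_ae (hf0.mono fun x hx => div_nonneg hx hZ.le)), integral_div]
  refine nonempty_inter_of_measure_lt_add μ hI (subset_univ S) (subset_univ I) ?_
  rw [happly univ .univ, happly I hI, Measure.restrict_univ, div_self hZ.ne', ENNReal.ofReal_one]
  have htenth : ENNReal.ofReal (1 / 10) < ENNReal.ofReal ((∫ x in I, f x ∂ν) / Z) :=
    (ENNReal.ofReal_lt_ofReal_iff (div_pos (by linarith) hZ)).2 (by rw [lt_div_iff₀ hZ]; linarith)
  calc (1 : ENNReal) = 9 / 10 + ENNReal.ofReal (1 / 10) := by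
        rw [ENNReal.ofReal_div_of_pos (by norm_num), ENNReal.ofReal_one, ENNReal.ofReal_ofNat,
          ENNReal.div_add_div_same, show (9 : ENNReal) + 1 = 10 by norm_num,
          ENNReal.div_self (by norm_num) (by norm_num)]
    _ < _ := ENNReal.add_lt_add_of_le_of_lt (ENNReal.div_lt_top (by norm_num) (by norm_num)).ne
        hS htenth

lemma one_add_one_div_le_div_of_sub_mem {m M a b : ℝ} (hm : 0 ≤ m) (hM : 3 * m + 1 ≤ 6 * M)
    (ha : a - m ∈ Ioc 0 (1 / 3)) (hb : b - m ∈ Ioi (2 / 3)) :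
    1 + 1 / (6 * M) ≤ b / a := by
  obtain ⟨ha0, ha1⟩ := ha
  have hb0 : 2 / 3 < b - m := hb
  calc 1 + 1 / (6 * M) ≤ 1 + 1 / (3 * m + 1) := by
        gcongr
    _ = (m + 2 / 3) / (m + 1 / 3) := by
        field_simp
        ring
    _ ≤ b / a := div_le_div₀ (by linarith) (by linarith) (by linarith) (by linarith)

open MeasureTheory in
theorem stmt15_general (n : ℕ) (hn : 1 ≤ n) (c : ℝ) (hc : 0 ≤ c)
    (μ : Measure ℝ)
    (hμ : μ = (volume.restrict (Set.Ioi (0:ℝ))).withDensity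
      (fun x => ENNReal.ofReal
        (Real.exp (-(x - c) ^ 2 / 2) * x ^ (n - 1)
          / ∫ y in Set.Ioi (0:ℝ), Real.exp (-(y - c) ^ 2 / 2) * y ^ (n - 1))))
    (S : Set ℝ)
    (hprob : (9 / 10 : ENNReal) ≤ μ S) :
    ∃ a ∈ S, ∃ b ∈ S,
      1 + 1 / (6 * max c (Real.sqrt n)) ≤ b / a := by
  set m := gaussPowMode c (n - 1)
  have hm : 0 ≤ m := gaussPowMode_nonneg hc
  have hmeets : ∀ s ⊆ Ioi (0 : ℝ), MeasurableSet s → √(2 * π) / 10 < ∫ t in s, exp (-t ^ 2) →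
      ∃ x ∈ S, x - m ∈ s := by
    intro s hs0 hs hmass
    have hsub : (· - m) ⁻¹' s ⊆ Ioi 0 := fun x hx => mem_Ioi.2 (by linarith [mem_Ioi.1 (hs0 hx)])
    subst hμ
    refine nonempty_inter_of_integral_div_ten_lt (f := gaussPow c (n - 1)) (I := (· - m) ⁻¹' s)
      ((integrableOn_gaussPow hc).mono_set Ioi_subset_Ici_self)
      ((ae_restrict_iff' measurableSet_Ioi).2 (ae_of_all _ fun _ hx => gaussPow_nonneg hx.le))
      (hs.preimage (measurable_sub_const m)) hprob ?_
    rw [Measure.restrict_restrict (hs.preimage (measurable_sub_const m)), inter_eq_left.2 hsub]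
    exact integral_gaussPow_div_ten_lt hc hs (hs0.trans Ioi_subset_Ici_self) hmass
  obtain ⟨a, haS, ha⟩ := hmeets (Ioc 0 (1 / 3)) Ioc_subset_Ioi_self measurableSet_Ioc
    sqrt_two_pi_div_ten_lt_integral_Ioc
  obtain ⟨b, hbS, hb⟩ := hmeets (Ioi (2 / 3)) (Ioi_subset_Ioi (by norm_num)) measurableSet_Ioi
    sqrt_two_pi_div_ten_lt_integral_Ioi
  exact ⟨a, haS, b, hbS,
    one_add_one_div_le_div_of_sub_mem hm (three_mul_gaussPowMode_sub_one_add_one_le hn hc) ha hb⟩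

open MeasureTheory in
theorem stmt15 (n : ℕ) (hn : 1 ≤ n) (c : ℝ) (hc : 0 ≤ c)
    (μ : Measure ℝ)
    (hμ : μ = (volume.restrict (Set.Ioi (0:ℝ))).withDensity
      (fun x => ENNReal.ofReal
        (Real.exp (-(x - c) ^ 2 / 2) * x ^ (n - 1)
          / ∫ y in Set.Ioi (0:ℝ), Real.exp (-(y - c) ^ 2 / 2) * y ^ (n - 1))))
    (S : Set ℝ) (hS : MeasurableSet S) (hSsub : S ⊆ Set.Ioi 0)
    (hprob : (9 / 10 : ENNReal) ≤ μ S) :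
    ∃ a ∈ S, ∃ b ∈ S,
      1 + 1 / (6 * max c (Real.sqrt n)) ≤ b / a :=
  stmt15_general n hn c hc μ hμ S hprob
end
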